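/- arXiv:math/9612206 — 3 statements merged into one kernel-verified Lean document; each statement's English description precedes it below -/
import Mathlib

section
/- Let G = ⟨𝒜 ∣ ℛ⟩ and let H be the subgroup generated by ℬ ⊆ 𝒜. If v is an injective word in the generators 𝒜 that represents an element h ∈ H, then for all m ∈ ℕ, with respect to the presentation ⟨𝒜, τ ∣ ℛ, [τ, b] = 1 ∀ b ∈ ℬ⟩, one has m·d_ℬ(1, h) ≤ Area(v τ^m v⁻¹ τ⁻m), where d_ℬ is the word metric on H with respect to the generating set ℬ. -/
open scoped commutatorElement

/-! # Common definitions: words, presentations, area, Dehn functions,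
isodiametric functions, word metrics and distortion. -/

section Core

variable {A : Type*} [DecidableEq A]

/-- A word (element of the free group) is *null-homotopic* with respect to a set of
relators `R` if it lies in the normal closure of `R`, i.e. represents the identity
of the presented group. -/
def NullHomotopic (R : Set (FreeGroup A)) (w : FreeGroup A) : Prop :=
  w ∈ Subgroup.normalClosure R

/-- `areaOf R w` is the least `N` such that `w` can be written in the free group as a
product of `N` conjugates of elements of `R ∪ R⁻¹`. -/
noncomputable def areaOf (R : Set (FreeGroup A)) (w : FreeGroup A) : ℕ :=
  sInf {N : ℕ | ∃ g r : Fin N → FreeGroup A,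
    (∀ i, r i ∈ R ∨ (r i)⁻¹ ∈ R) ∧
    w = (List.ofFn fun i => (g i)⁻¹ * r i * g i).prod}

/-- The Dehn function of the presentation with relators `R`. -/
noncomputable def dehn (R : Set (FreeGroup A)) (n : ℕ) : ℕ :=
  sSup {a : ℕ | ∃ w : FreeGroup A, NullHomotopic R w ∧ w.norm ≤ n ∧ areaOf R w = a}

/-- `diamOf R w` is the minimum over all expressions of `w` as a product of conjugates
`gᵢ⁻¹ rᵢ gᵢ` of relators of the maximal length of the conjugating elements `gᵢ`. -/
noncomputable def diamOf (R : Set (FreeGroup A)) (w : FreeGroup A) : ℕ :=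
  sInf {D : ℕ | ∃ (N : ℕ) (g r : Fin N → FreeGroup A),
    (∀ i, r i ∈ R ∨ (r i)⁻¹ ∈ R) ∧
    w = (List.ofFn fun i => (g i)⁻¹ * r i * g i).prod ∧
    ∀ i, (g i).norm ≤ D}

/-- The isodiametric function of the presentation with relators `R`. -/
noncomputable def isodiam (R : Set (FreeGroup A)) (n : ℕ) : ℕ :=
  sSup {d : ℕ | ∃ w : FreeGroup A, NullHomotopic R w ∧ w.norm ≤ n ∧ diamOf R w = d}

/-- The word norm `d(1,g)` of `g` with respect to the marking `π` of the group `G` by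
the free group on `A`: the least length of a word in the alphabet representing `g`. -/
noncomputable def wordNorm {G : Type*} [Group G] (π : FreeGroup A →* G) (g : G) : ℕ :=
  sInf {n : ℕ | ∃ w : FreeGroup A, π w = g ∧ w.norm = n}

/-- The word metric distance `d(1,g)` in the group presented by `R`, with respect to the
images of the generators `A`. -/
noncomputable def gDist (R : Set (FreeGroup A)) (g : PresentedGroup R) : ℕ :=
  wordNorm (PresentedGroup.mk R) g

/-- The subgroup of the group presented by `R` generated by the images of `B ⊆ A`. -/
def Hsub (R : Set (FreeGroup A)) (B : Set A) : Subgroup (PresentedGroup R) :=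
  Subgroup.closure (PresentedGroup.mk R '' (FreeGroup.of '' B))

/-- The word metric distance `d_B(1,g)` on the subgroup generated by `B ⊆ A`:
the least length of a word in the letters of `B` representing `g`. -/
noncomputable def subDist (R : Set (FreeGroup A)) (B : Set A) (g : PresentedGroup R) : ℕ :=
  wordNorm ((PresentedGroup.mk R).comp (FreeGroup.map (Subtype.val : B → A))) g

/-- The distortion function `δ(n) = (1/n) · max { d_B(1,h) : h ∈ ⟨B⟩, d(1,h) ≤ n }` of the
subgroup generated by `B ⊆ A` in the group presented by `R`. -/
noncomputable def distortion (R : Set (FreeGroup A)) (B : Set A) (n : ℕ) : ℕ :=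
  (sSup {m : ℕ | ∃ g : PresentedGroup R, g ∈ Hsub R B ∧ gDist R g ≤ n ∧ subDist R B g = m}) / n

/-- `Preceq g f` (`g ⪯ f`): there are positive constants `A B C` with
`g n ≤ A * f (B*n + C)` for all `n`. -/
def Preceq (g f : ℕ → ℕ) : Prop :=
  ∃ A B C : ℕ, 0 < A ∧ 0 < B ∧ 0 < C ∧ ∀ n, g n ≤ A * f (B * n + C)

/-- `SimEq f g` (`f ≃ g`): mutual domination. -/
def SimEq (f g : ℕ → ℕ) : Prop := Preceq f g ∧ Preceq g f

/-- The function `n ↦ ⌈n^r⌉` for a real exponent `r`. -/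
noncomputable def npow (r : ℝ) : ℕ → ℕ := fun n => ⌈(n : ℝ) ^ r⌉₊

/-- A word `v` is *injective* if no non-empty subword of (the reduced word of) `v`
is null-homotopic. -/
def InjectiveWord (R : Set (FreeGroup A)) (v : FreeGroup A) : Prop :=
  ∀ p u s : List (A × Bool), v.toWord = p ++ u ++ s → u ≠ [] →
    ¬ NullHomotopic R (FreeGroup.mk u)

/-- Relators for the HNN extension `⟨A, τ ∣ R, [τ,b] = 1 ∀ b ∈ B⟩`, with
`τ` the letter `none` and `A` embedded via `some`. -/
def HNNRels (R : Set (FreeGroup A)) (B : Set A) : Set (FreeGroup (Option A)) :=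
  (FreeGroup.map some '' R) ∪
  {r | ∃ b ∈ B, r = ⁅FreeGroup.of (none : Option A), FreeGroup.of (some b)⁆}

variable {A' : Type*} [DecidableEq A']

/-- Relators of the cartesian product of the presentations `⟨A ∣ R⟩` and `⟨A' ∣ R'⟩`. -/
def ProdRels (R : Set (FreeGroup A)) (R' : Set (FreeGroup A')) :
    Set (FreeGroup (A ⊕ A')) :=
  (FreeGroup.map Sum.inl '' R) ∪ (FreeGroup.map Sum.inr '' R') ∪
  {r | ∃ (x : A) (y : A'), r = ⁅FreeGroup.of (Sum.inl x : A ⊕ A'), FreeGroup.of (Sum.inr y)⁆}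

/-- Deleting all letters from `A'`. -/
def projL : FreeGroup (A ⊕ A') →* FreeGroup A :=
  FreeGroup.lift (Sum.elim FreeGroup.of fun _ => 1)

/-- Deleting all letters from `A`. -/
def projR : FreeGroup (A ⊕ A') →* FreeGroup A' :=
  FreeGroup.lift (Sum.elim (fun _ => 1) FreeGroup.of)

end Core

section Gc

/-- Generators `x_1, …, x_c, t` of `G_c`: `some i` is `x_{i+1}` and `none` is `t`. -/
abbrev GcGen (c : ℕ) := Option (Fin c)

/-- The standard relators of `G_c = ℤ^c ⋊_{φ_c} ℤ`:
`[x_i,x_j] = 1` for all `i,j`; `[x_c,t] = 1`; `[x_i,t] = x_{i+1}` for `i < c`. -/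
def GcRels (c : ℕ) : Set (FreeGroup (GcGen c)) :=
  {r | (∃ i j : Fin c, r = ⁅FreeGroup.of (some i), FreeGroup.of (some j)⁆) ∨
       (∃ i : Fin c, (i : ℕ) = c - 1 ∧
         r = ⁅FreeGroup.of (some i), FreeGroup.of (none : GcGen c)⁆) ∨
       (∃ i j : Fin c, (j : ℕ) = (i : ℕ) + 1 ∧
         r = ⁅FreeGroup.of (some i), FreeGroup.of (none : GcGen c)⁆ *
             (FreeGroup.of (some j))⁻¹)}

/-- The central generator `z_c = x_c` of `G_c` (as a word; junk value `1` if `c = 0`). -/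
def zword (c : ℕ) : FreeGroup (GcGen c) :=
  if h : 0 < c then FreeGroup.of (some ⟨c - 1, Nat.sub_lt h Nat.one_pos⟩) else 1

/-- The generator `z_c = x_c`, as a subset of the alphabet of `G_c`. -/
def Bz (c : ℕ) : Set (GcGen c) := {g | ∃ i : Fin c, (i : ℕ) = c - 1 ∧ g = some i}

/-- Relators of the amalgamated free product `G_a *_{⟨z⟩} G_b` obtained by identifying the
centre `⟨z_a⟩` of `G_a` with the centre `⟨z_b⟩` of `G_b`. -/
def AmalRels (a b : ℕ) : Set (FreeGroup (GcGen a ⊕ GcGen b)) :=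
  (FreeGroup.map Sum.inl '' GcRels a) ∪ (FreeGroup.map Sum.inr '' GcRels b) ∪
  {r | ∃ (i : Fin a) (j : Fin b), (i : ℕ) = a - 1 ∧ (j : ℕ) = b - 1 ∧
    r = FreeGroup.of (Sum.inl (some i)) * (FreeGroup.of (Sum.inr (some j)))⁻¹}

end Gc

section Gamma

/-- Generators of presentation 2.2 of `Γ(a,b,c)`:
`x_1,…,x_{a−1}, z, t_a, y_1,…,y_{b−1}, t_b, u_1,…,u_{c−1}, ζ, t_c`. -/
inductive GammaGen (a b c : ℕ) where
  | x (i : Fin (a - 1)) : GammaGen a b c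
  | z : GammaGen a b c
  | ta : GammaGen a b c
  | y (i : Fin (b - 1)) : GammaGen a b c
  | tb : GammaGen a b c
  | u (i : Fin (c - 1)) : GammaGen a b c
  | zeta : GammaGen a b c
  | tc : GammaGen a b c
  deriving DecidableEq

/-- The relators of presentation 2.2 of
`Γ(a,b,c) = G_a *_{z_a=z_b} (G_b × ⟨ζ⟩) *_{ζ=z_c} G_c`. -/
def GammaRels (a b c : ℕ) : Set (FreeGroup (GammaGen a b c)) :=
  let X : Fin (a - 1) → FreeGroup (GammaGen a b c) := fun i => FreeGroup.of (GammaGen.x i)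
  let Y : Fin (b - 1) → FreeGroup (GammaGen a b c) := fun i => FreeGroup.of (GammaGen.y i)
  let U : Fin (c - 1) → FreeGroup (GammaGen a b c) := fun i => FreeGroup.of (GammaGen.u i)
  let Z : FreeGroup (GammaGen a b c) := FreeGroup.of GammaGen.z
  let Ze : FreeGroup (GammaGen a b c) := FreeGroup.of GammaGen.zeta
  let Ta : FreeGroup (GammaGen a b c) := FreeGroup.of GammaGen.ta
  let Tb : FreeGroup (GammaGen a b c) := FreeGroup.of GammaGen.tb
  let Tc : FreeGroup (GammaGen a b c) := FreeGroup.of GammaGen.tc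
  {r | -- the relators ℛ_a
       (∃ i, r = ⁅Z, X i⁆) ∨ (∃ i j, r = ⁅X i, X j⁆) ∨ r = ⁅Z, Ta⁆ ∨
       (∃ i j : Fin (a - 1), (j : ℕ) = (i : ℕ) + 1 ∧ r = ⁅X i, Ta⁆ * (X j)⁻¹) ∨
       (∃ i : Fin (a - 1), (i : ℕ) = a - 2 ∧ r = ⁅X i, Ta⁆ * Z⁻¹) ∨
       -- the relators ℛ_b
       (∃ i, r = ⁅Z, Y i⁆) ∨ (∃ i, r = ⁅Ze, Y i⁆) ∨ (∃ i j, r = ⁅Y i, Y j⁆) ∨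
       r = ⁅Z, Tb⁆ ∨ r = ⁅Ze, Tb⁆ ∨ r = ⁅Z, Ze⁆ ∨
       (∃ i j : Fin (b - 1), (j : ℕ) = (i : ℕ) + 1 ∧ r = ⁅Y i, Tb⁆ * (Y j)⁻¹) ∨
       (∃ i : Fin (b - 1), (i : ℕ) = b - 2 ∧ r = ⁅Y i, Tb⁆ * Z⁻¹) ∨
       -- the relators ℛ_c
       (∃ i, r = ⁅Ze, U i⁆) ∨ (∃ i j, r = ⁅U i, U j⁆) ∨ r = ⁅Ze, Tc⁆ ∨
       (∃ i j : Fin (c - 1), (j : ℕ) = (i : ℕ) + 1 ∧ r = ⁅U i, Tc⁆ * (U j)⁻¹) ∨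
       (∃ i : Fin (c - 1), (i : ℕ) = c - 2 ∧ r = ⁅U i, Tc⁆ * Ze⁻¹)}

end Gamma

section J

/-- Generators of the natural presentation of `J(a,b)`:
`𝒜_a = {x_1,…,x_{a−1}, t_a}`, `𝒜_b = {y_1,…,y_{b−1}, t_b}`, the shared central
generator `z`, and the primed copies. -/
inductive JGen (a b : ℕ) where
  | x (i : Fin (a - 1)) : JGen a b
  | ta : JGen a b
  | y (i : Fin (b - 1)) : JGen a b
  | tb : JGen a b
  | z : JGen a b
  | x' (i : Fin (a - 1)) : JGen a b
  | ta' : JGen a b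
  | y' (i : Fin (b - 1)) : JGen a b
  | tb' : JGen a b
  | z' : JGen a b
  deriving DecidableEq

/-- The subset `𝒜_b ∪ {z}` of the generators of `J(a,b)`. -/
def JBSet (a b : ℕ) : Set (JGen a b) :=
  {g | (∃ i, g = JGen.y i) ∨ g = JGen.tb ∨ g = JGen.z}

/-- The subset `𝒜'_b ∪ {z'}` of the generators of `J(a,b)`. -/
def JBSet' (a b : ℕ) : Set (JGen a b) :=
  {g | (∃ i, g = JGen.y' i) ∨ g = JGen.tb' ∨ g = JGen.z'}

/-- The subset `𝒜_a ∪ {z}` of the generators of `J(a,b)`. -/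
def JASet (a b : ℕ) : Set (JGen a b) :=
  {g | (∃ i, g = JGen.x i) ∨ g = JGen.ta ∨ g = JGen.z}

/-- Relators of the natural presentation of
`J(a,b) = G_a *_{z_a=z_b} (G_b × G'_b) *_{z'_b=z'_a} G'_a`:
the relators `𝒮_a, 𝒮_b` of `G_a, G_b`, their primed copies, and the commuting
relators `[b,b'] = 1` for `b ∈ 𝒜_b ∪ {z}`, `b' ∈ 𝒜'_b ∪ {z'}`. -/
def JRels (a b : ℕ) : Set (FreeGroup (JGen a b)) :=
  let X : Fin (a - 1) → FreeGroup (JGen a b) := fun i => FreeGroup.of (JGen.x i)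
  let Y : Fin (b - 1) → FreeGroup (JGen a b) := fun i => FreeGroup.of (JGen.y i)
  let X' : Fin (a - 1) → FreeGroup (JGen a b) := fun i => FreeGroup.of (JGen.x' i)
  let Y' : Fin (b - 1) → FreeGroup (JGen a b) := fun i => FreeGroup.of (JGen.y' i)
  let Z : FreeGroup (JGen a b) := FreeGroup.of JGen.z
  let Z' : FreeGroup (JGen a b) := FreeGroup.of JGen.z'
  let Ta : FreeGroup (JGen a b) := FreeGroup.of JGen.ta
  let Tb : FreeGroup (JGen a b) := FreeGroup.of JGen.tb
  let Ta' : FreeGroup (JGen a b) := FreeGroup.of JGen.ta'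
  let Tb' : FreeGroup (JGen a b) := FreeGroup.of JGen.tb'
  {r | -- the relators 𝒮_a
       (∃ i, r = ⁅Z, X i⁆) ∨ (∃ i j, r = ⁅X i, X j⁆) ∨ r = ⁅Z, Ta⁆ ∨
       (∃ i j : Fin (a - 1), (j : ℕ) = (i : ℕ) + 1 ∧ r = ⁅X i, Ta⁆ * (X j)⁻¹) ∨
       (∃ i : Fin (a - 1), (i : ℕ) = a - 2 ∧ r = ⁅X i, Ta⁆ * Z⁻¹) ∨
       -- the relators 𝒮_b
       (∃ i, r = ⁅Z, Y i⁆) ∨ (∃ i j, r = ⁅Y i, Y j⁆) ∨ r = ⁅Z, Tb⁆ ∨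
       (∃ i j : Fin (b - 1), (j : ℕ) = (i : ℕ) + 1 ∧ r = ⁅Y i, Tb⁆ * (Y j)⁻¹) ∨
       (∃ i : Fin (b - 1), (i : ℕ) = b - 2 ∧ r = ⁅Y i, Tb⁆ * Z⁻¹) ∨
       -- the relators 𝒮'_a
       (∃ i, r = ⁅Z', X' i⁆) ∨ (∃ i j, r = ⁅X' i, X' j⁆) ∨ r = ⁅Z', Ta'⁆ ∨
       (∃ i j : Fin (a - 1), (j : ℕ) = (i : ℕ) + 1 ∧ r = ⁅X' i, Ta'⁆ * (X' j)⁻¹) ∨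
       (∃ i : Fin (a - 1), (i : ℕ) = a - 2 ∧ r = ⁅X' i, Ta'⁆ * Z'⁻¹) ∨
       -- the relators 𝒮'_b
       (∃ i, r = ⁅Z', Y' i⁆) ∨ (∃ i j, r = ⁅Y' i, Y' j⁆) ∨ r = ⁅Z', Tb'⁆ ∨
       (∃ i j : Fin (b - 1), (j : ℕ) = (i : ℕ) + 1 ∧ r = ⁅Y' i, Tb'⁆ * (Y' j)⁻¹) ∨
       (∃ i : Fin (b - 1), (i : ℕ) = b - 2 ∧ r = ⁅Y' i, Tb'⁆ * Z'⁻¹) ∨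
       -- the commuting relators
       (∃ g ∈ JBSet a b, ∃ g' ∈ JBSet' a b,
         r = ⁅FreeGroup.of g, FreeGroup.of g'⁆)}

/-- The involution of the alphabet of `J(a,b)` exchanging each generator with its
primed copy. -/
def JPrime (a b : ℕ) : JGen a b → JGen a b
  | .x i => .x' i
  | .ta => .ta'
  | .y i => .y' i
  | .tb => .tb'
  | .z => .z'
  | .x' i => .x i
  | .ta' => .ta
  | .y' i => .y i
  | .tb' => .tb
  | .z' => .z

end J

/-! Map a word `w` over `𝒜 ∪ {τ}` to the pair `(∂w/∂τ, w̄) ∈ ℤ[G] ⋊ G` (Fox derivative with respect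
to the stable letter), and weigh `∑ n_g g ∈ ℤ[G]` by `∑ n_g d_ℬ(1, g)`. A conjugate `u⁻¹ r u` of a
relator has Fox derivative `ū⁻¹ · ∂r/∂τ`: this is `0` for `r ∈ ℛ` and `γ - γb` for `r = [τ, b]`,
whose weight is at most one because right multiplication by `b ∈ ℬ` moves `d_ℬ` by at most one.
So the weight grows by at most one per relator in a van Kampen product, while
`v τ^m v⁻¹ τ^{-m}` has Fox derivative `m (h - 1)`, of weight `m · d_ℬ(1, h)`. -/

open Multiplicative SemidirectProduct

theorem exists_prod_conj_of_mem_normalClosure {G : Type*} [Group G] {S : Set G} {w : G}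
    (hw : w ∈ Subgroup.normalClosure S) :
    ∃ L : List (G × G), (∀ p ∈ L, p.2 ∈ S ∨ p.2⁻¹ ∈ S) ∧
      w = (L.map fun p => p.1⁻¹ * p.2 * p.1).prod := by
  induction hw using Subgroup.closure_induction with
  | mem x hx =>
    obtain ⟨s, hs, hconj⟩ := Group.mem_conjugatesOfSet_iff.1 hx
    obtain ⟨c, rfl⟩ := isConj_iff.1 hconj
    exact ⟨[(c⁻¹, s)], by simpa using Or.inl hs, by simp⟩
  | one => exact ⟨[], by simp, by simp⟩
  | mul x y _ _ hx hy =>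
    obtain ⟨L₁, hL₁, rfl⟩ := hx
    obtain ⟨L₂, hL₂, rfl⟩ := hy
    refine ⟨L₁ ++ L₂, fun p hp => ?_, by simp⟩
    exact (List.mem_append.1 hp).elim (hL₁ p) (hL₂ p)
  | inv x _ hx =>
    obtain ⟨L, hL, rfl⟩ := hx
    refine ⟨(L.map fun p => (p.1, p.2⁻¹)).reverse, ?_, ?_⟩
    · simp only [List.mem_reverse, List.mem_map, forall_exists_index, and_imp]
      rintro _ q hq rfl
      simpa [or_comm] using hL q hq
    · simp [List.prod_inv_reverse, Function.comp_def, mul_assoc]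

section Area

variable {A : Type*} {R : Set (FreeGroup A)}

theorem le_areaOf (ν : FreeGroup A → ℤ) (hν₁ : ν 1 ≤ 0)
    (hν : ∀ g r, r ∈ R ∨ r⁻¹ ∈ R → ∀ w, ν (g⁻¹ * r * g * w) ≤ ν w + 1)
    {w : FreeGroup A} (hw : w ∈ Subgroup.normalClosure R) : ν w ≤ areaOf R w := by
  have hlist : ∀ L : List (FreeGroup A × FreeGroup A), (∀ p ∈ L, p.2 ∈ R ∨ p.2⁻¹ ∈ R) →
      ν (L.map fun p => p.1⁻¹ * p.2 * p.1).prod ≤ L.length := by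
    intro L hL
    induction L with
    | nil => simpa using hν₁
    | cons p L ih =>
      have hp := hν p.1 p.2 (hL p (by simp)) (L.map fun p => p.1⁻¹ * p.2 * p.1).prod
      have hL' := ih fun q hq => hL q (by simp [hq])
      simp only [List.map_cons, List.prod_cons, List.length_cons]
      push_cast
      linarith
  have hbound : ∀ N ∈ {N : ℕ | ∃ g r : Fin N → FreeGroup A,
      (∀ i, r i ∈ R ∨ (r i)⁻¹ ∈ R) ∧ w = (List.ofFn fun i => (g i)⁻¹ * r i * g i).prod},
      ν w ≤ N := by
    rintro N ⟨g, r, hr, rfl⟩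
    have := hlist (List.ofFn fun i => (g i, r i)) (by simpa [List.mem_ofFn] using hr)
    simpa [List.map_ofFn, Function.comp_def] using this
  obtain ⟨L, hL, hwL⟩ := exists_prod_conj_of_mem_normalClosure hw
  refine hbound _ (Nat.sInf_mem ⟨L.length, fun i => L[i].1, fun i => L[i].2,
    fun i => hL _ (List.getElem_mem _), ?_⟩)
  rw [hwL, ← List.ofFn_getElem_eq_map]
  rfl

end Area

section WordNorm

variable {A G : Type*} [DecidableEq A] [Group G] (π : FreeGroup A →* G)

theorem wordNorm_one : wordNorm π 1 = 0 :=
  Nat.sInf_eq_zero.2 (Or.inl ⟨1, map_one π, FreeGroup.norm_one⟩)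

theorem wordNorm_mul_le (g : G) (x : FreeGroup A) :
    wordNorm π (g * π x) ≤ wordNorm π g + x.norm := by
  by_cases hg : ∃ w, π w = g
  · obtain ⟨w, hw⟩ := hg
    obtain ⟨u, hu, hun⟩ := Nat.sInf_mem (s := {n | ∃ w, π w = g ∧ w.norm = n}) ⟨_, w, hw, rfl⟩
    calc wordNorm π (g * π x) ≤ (u * x).norm := Nat.sInf_le ⟨u * x, by rw [map_mul, hu], rfl⟩
      _ ≤ u.norm + x.norm := FreeGroup.norm_mul_le u x
      _ = wordNorm π g + x.norm := by rw [hun]; rfl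
  · -- outside the range of `π` the word norm takes the junk value `0`
    have hempty : {n | ∃ w, π w = g * π x ∧ w.norm = n} = ∅ :=
      Set.eq_empty_of_forall_notMem fun n ⟨w, hw, _⟩ =>
        hg ⟨w * x⁻¹, by rw [map_mul, map_inv, hw, mul_inv_cancel_right]⟩
    simp [wordNorm, hempty]

theorem abs_wordNorm_sub_wordNorm_mul_of (g : G) (a : A) :
    |(wordNorm π g : ℤ) - wordNorm π (g * π (FreeGroup.of a))| ≤ 1 := by
  have h₁ := wordNorm_mul_le π g (FreeGroup.of a)
  have h₂ := wordNorm_mul_le π (g * π (FreeGroup.of a)) (FreeGroup.of a)⁻¹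
  rw [map_inv, mul_inv_cancel_right, FreeGroup.norm_inv_eq] at h₂
  rw [FreeGroup.norm_of] at h₁ h₂
  rw [abs_le]
  omega

end WordNorm

theorem SemidirectProduct.inv_mul_inl_mul {N G : Type*} [CommGroup N] [Group G]
    {φ : G →* MulAut N} (x : N ⋊[φ] G) (n : N) :
    x⁻¹ * inl n * x = inl (φ x.right⁻¹ n) := by
  ext <;> simp [mul_comm]

section Fox

variable (G : Type*) [Group G]

attribute [local instance] Finsupp.comapDistribMulAction in
noncomputable def regularAut : G →* MulAut (Multiplicative (G →₀ ℤ)) :=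
  (MulAutMultiplicative (G →₀ ℤ)).symm.toMonoidHom.comp (DistribMulAction.toAddAut G (G →₀ ℤ))

variable {G}

theorem regularAut_ofAdd_single (g x : G) (n : ℤ) :
    regularAut G g (ofAdd (Finsupp.single x n)) = ofAdd (Finsupp.single (g * x) n) :=
  Finsupp.mapDomain_single

variable {A : Type*} (π : FreeGroup A →* G)

/-- `(foxStable π w).left` is the Fox derivative `∂w/∂τ ∈ ℤ[G]` with respect to the stable
letter `τ = none`, and `(foxStable π w).right` is the image of `w` in `G`. -/
noncomputable def foxStable : FreeGroup (Option A) →* Multiplicative (G →₀ ℤ) ⋊[regularAut G] G :=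
  FreeGroup.lift fun o => o.elim (inl (ofAdd (Finsupp.single 1 1))) fun a => inr (π (.of a))

theorem foxStable_of_none :
    foxStable π (.of none) = inl (ofAdd (Finsupp.single 1 1)) :=
  FreeGroup.lift_apply_of

theorem foxStable_of_some (a : A) :
    foxStable π (.of (some a)) = inr (π (.of a)) :=
  FreeGroup.lift_apply_of

theorem foxStable_map_some (x : FreeGroup A) :
    foxStable π (FreeGroup.map some x) = inr (π x) := by
  induction x using FreeGroup.induction_on with
  | C1 => simp
  | of a => exact FreeGroup.lift_apply_of
  | inv_of a h => simp only [map_inv, h]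
  | mul x y hx hy => simp only [map_mul, hx, hy]

theorem foxStable_commutator (b : A) :
    foxStable π ⁅FreeGroup.of (none : Option A), FreeGroup.of (some b)⁆ =
      inl (ofAdd (Finsupp.single 1 1 - Finsupp.single (π (.of b)) 1)) := by
  simp only [commutatorElement_def, map_mul, map_inv, foxStable_of_none, foxStable_of_some]
  rw [← map_inv inl, ← map_inv inr, mul_assoc _ (inr _), mul_assoc (inl _), ← inl_aut, ← map_mul,
    map_inv, regularAut_ofAdd_single, mul_one, ofAdd_sub, div_eq_mul_inv]

end Fox

section StableWeight

variable {A G : Type*} [Group G] (π : FreeGroup A →* G) (d : G → ℤ)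

noncomputable def stableWeight (w : FreeGroup (Option A)) : ℤ :=
  Finsupp.linearCombination ℤ d (foxStable π w).left.toAdd

theorem stableWeight_one : stableWeight π d 1 = 0 := by
  simp [stableWeight]

variable {d} {R : Set (FreeGroup A)} {B : Set A}

theorem exists_foxStable_eq_inl_of_mem_HNNRels (hR : ∀ r ∈ R, π r = 1)
    (hd : ∀ γ, ∀ b ∈ B, |d γ - d (γ * π (.of b))| ≤ 1)
    {r : FreeGroup (Option A)} (hr : r ∈ HNNRels R B) :
    ∃ n, foxStable π r = inl n ∧
      ∀ γ, |Finsupp.linearCombination ℤ d (regularAut G γ n).toAdd| ≤ 1 := by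
  rcases hr with ⟨r₀, hr₀, rfl⟩ | ⟨b, hb, rfl⟩
  · exact ⟨1, by rw [foxStable_map_some, hR r₀ hr₀, map_one, map_one], by simp⟩
  · refine ⟨_, foxStable_commutator π b, fun γ => ?_⟩
    simpa [ofAdd_sub, regularAut_ofAdd_single] using hd γ b hb

theorem exists_foxStable_eq_inl_of_relator (hR : ∀ r ∈ R, π r = 1)
    (hd : ∀ γ, ∀ b ∈ B, |d γ - d (γ * π (.of b))| ≤ 1)
    {r : FreeGroup (Option A)} (hr : r ∈ HNNRels R B ∨ r⁻¹ ∈ HNNRels R B) :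
    ∃ n, foxStable π r = inl n ∧
      ∀ γ, |Finsupp.linearCombination ℤ d (regularAut G γ n).toAdd| ≤ 1 := by
  rcases hr with hr | hr
  · exact exists_foxStable_eq_inl_of_mem_HNNRels π hR hd hr
  · obtain ⟨n, hn, hbound⟩ := exists_foxStable_eq_inl_of_mem_HNNRels π hR hd hr
    refine ⟨n⁻¹, by rw [← inv_inv r, map_inv, hn, map_inv], fun γ => ?_⟩
    simpa using hbound γ

theorem stableWeight_conj_mul_le (hR : ∀ r ∈ R, π r = 1)
    (hd : ∀ γ, ∀ b ∈ B, |d γ - d (γ * π (.of b))| ≤ 1) (g r : FreeGroup (Option A))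
    (hr : r ∈ HNNRels R B ∨ r⁻¹ ∈ HNNRels R B) (w : FreeGroup (Option A)) :
    stableWeight π d (g⁻¹ * r * g * w) ≤ stableWeight π d w + 1 := by
  obtain ⟨n, hn, hbound⟩ := exists_foxStable_eq_inl_of_relator π hR hd hr
  have hconj : foxStable π (g⁻¹ * r * g) = inl (regularAut G (foxStable π g).right⁻¹ n) := by
    rw [map_mul, map_mul, map_inv, hn, inv_mul_inl_mul]
  have := (abs_le.1 (hbound (foxStable π g).right⁻¹)).2
  simp only [stableWeight, map_mul _ (g⁻¹ * r * g), hconj, mul_left, left_inl, right_inl,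
    map_one, MulAut.one_apply, toAdd_mul, map_add]
  linarith

theorem stableWeight_conj_pow (v : FreeGroup A) (m : ℕ) :
    stableWeight π d (FreeGroup.map some v * FreeGroup.of (none : Option A) ^ m *
      (FreeGroup.map some v)⁻¹ * (FreeGroup.of (none : Option A) ^ m)⁻¹) =
      m * (d (π v) - d 1) := by
  simp only [stableWeight, map_mul, map_inv, map_pow, foxStable_map_some, foxStable_of_none]
  rw [← map_pow, ← map_inv inr, ← inl_aut, ← map_inv inl, ← map_mul, left_inl, map_pow,
    regularAut_ofAdd_single, mul_one]
  simp only [toAdd_mul, toAdd_inv, toAdd_pow, toAdd_ofAdd, map_add, map_neg, map_nsmul,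
    Finsupp.linearCombination_single, one_smul, nsmul_eq_mul]
  ring

end StableWeight

section HNN

variable {A : Type*} (R : Set (FreeGroup A)) (B : Set A)

noncomputable def toHNN : PresentedGroup R →* PresentedGroup (HNNRels R B) :=
  PresentedGroup.map (FreeGroup.map some) fun r hr => Or.inl ⟨r, hr, rfl⟩

variable {R B}

theorem toHNN_mk (x : FreeGroup A) :
    toHNN R B (PresentedGroup.mk R x) = PresentedGroup.mk _ (FreeGroup.map some x) :=
  rfl

theorem commute_toHNN_of_mem_Hsub {h : PresentedGroup R} (hh : h ∈ Hsub R B) :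
    Commute (toHNN R B h) (PresentedGroup.of none) := by
  suffices Hsub R B ≤ (Subgroup.centralizer {PresentedGroup.of none}).comap (toHNN R B) from
    Subgroup.mem_centralizer_singleton_iff.1 (this hh)
  refine (Subgroup.closure_le _).2 ?_
  rintro _ ⟨_, ⟨b, hb, rfl⟩, rfl⟩
  refine Subgroup.mem_centralizer_singleton_iff.2 (commutatorElement_eq_one_iff_commute.1 ?_).symm
  rw [← PresentedGroup.one_of_mem (Or.inr ⟨b, hb, rfl⟩), map_commutatorElement]
  rfl

theorem mem_normalClosure_HNNRels {v : FreeGroup A} (hv : PresentedGroup.mk R v ∈ Hsub R B)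
    (m : ℕ) :
    FreeGroup.map some v * FreeGroup.of (none : Option A) ^ m *
      (FreeGroup.map some v)⁻¹ * (FreeGroup.of (none : Option A) ^ m)⁻¹ ∈
      Subgroup.normalClosure (HNNRels R B) := by
  rw [← PresentedGroup.mk_eq_one_iff]
  have hc := (commute_toHNN_of_mem_Hsub hv).pow_right m
  simp only [map_mul, map_inv, map_pow, ← toHNN_mk]
  rw [← PresentedGroup.of, hc.eq]
  group

end HNN

theorem stmt4_general {A : Type} [DecidableEq A]
    (R : Set (FreeGroup A)) (B : Set A)
    (v : FreeGroup A)
    (hvH : PresentedGroup.mk R v ∈ Hsub R B) (m : ℕ) :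
    m * subDist R B (PresentedGroup.mk R v) ≤
      areaOf (HNNRels R B)
        (FreeGroup.map some v * FreeGroup.of (none : Option A) ^ m *
          (FreeGroup.map some v)⁻¹ * (FreeGroup.of (none : Option A) ^ m)⁻¹) := by
  have hR : ∀ r ∈ R, PresentedGroup.mk R r = 1 := fun _ => PresentedGroup.one_of_mem
  have hd : ∀ γ, ∀ b ∈ B,
      |(subDist R B γ : ℤ) - subDist R B (γ * PresentedGroup.mk R (.of b))| ≤ 1 :=
    fun γ b hb => abs_wordNorm_sub_wordNorm_mul_of _ γ (⟨b, hb⟩ : B)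
  have key := le_areaOf (stableWeight (PresentedGroup.mk R) fun g => (subDist R B g : ℤ))
    (stableWeight_one _ _).le (stableWeight_conj_mul_le _ hR hd) (mem_normalClosure_HNNRels hvH m)
  have hd₁ : subDist R B 1 = 0 := wordNorm_one _
  rw [stableWeight_conj_pow, hd₁, Nat.cast_zero, sub_zero] at key
  exact_mod_cast key

theorem stmt4 {A : Type} [DecidableEq A] [Finite A]
    (R : Set (FreeGroup A)) (hR : R.Finite) (B : Set A)
    (v : FreeGroup A) (hv : InjectiveWord R v)
    (hvH : PresentedGroup.mk R v ∈ Hsub R B) (m : ℕ) :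
    m * subDist R B (PresentedGroup.mk R v) ≤
      areaOf (HNNRels R B)
        (FreeGroup.map some v * FreeGroup.of (none : Option A) ^ m *
          (FreeGroup.map some v)⁻¹ * (FreeGroup.of (none : Option A) ^ m)⁻¹) :=
  stmt4_general R B v hvH m
end

section
/- For every integer c ≥ 1, the distortion of the centre ⟨z_c⟩ of G_c in G_c is ≃ n^{c−1}; equivalently, the function n ↦ max{|m| : d(1, z_c^m) ≤ n} is ≃ n^c, where d is the word metric on G_c with respect to its standard generators. -/
open scoped commutatorElement

/-!
Write `z = x_c`. For the upper bound, `G_c` acts on `ℤ^c` by affine maps: `x_i` translates by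
the basis vector `e_i` and `t` acts by the unipotent map `1 - S`, `S` the shift `e_i ↦ e_(i+1)`.
One letter turns a vector with `|v_j| ≤ a^j` for all `j` into one with `|v_j| ≤ (a+1)^j`, so a
word of length `ℓ` moves `0` to a vector with `|v_j| ≤ ℓ^j`; as `z^m` moves `0` to `m e_c`,
`|m| ≤ d(1, z^m)^c`.

For the lower bound, on the abelian subgroup `⟨x_1, …, x_c⟩` the map `k ↦ ⁅k, t⁆` is
`N = 1 - conj_t`, with `N x_i = x_(i+1)` and `N x_c = 0`. Commutation with `t^n` is
`1 - (1 - N)^n ≡ n N (mod N²)`, so the word `⁅⋯⁅x_1^n, t^n⁆, …, t^n⁆` (`c - 1` commutators),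
of length at most `4^(c-1) n`, represents `z^(n^c)`.

On `⟨z⟩ ≅ ℤ` the generator `z` gives the metric `|m|`, so the distortion is `(max |m|)/n`.
-/

namespace FreeGroup

variable {α : Type*} [DecidableEq α]

theorem norm_of_zpow (a : α) (m : ℤ) : (of a ^ m).norm = m.natAbs := by
  obtain ⟨k, rfl | rfl⟩ := Int.eq_nat_or_neg m <;> simp [norm_inv_eq, norm_of_pow]

theorem norm_commutatorElement_le (x y : FreeGroup α) :
    ⁅x, y⁆.norm ≤ 2 * x.norm + 2 * y.norm := by
  have h₁ := norm_mul_le (x * y * x⁻¹) y⁻¹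
  have h₂ := norm_mul_le (x * y) x⁻¹
  have h₃ := norm_mul_le x y
  rw [norm_inv_eq] at h₁ h₂
  rw [commutatorElement_def]
  omega

theorem abs_toAdd_lift_le_norm (f : α → ℤ) (hf : ∀ a, |f a| ≤ 1) (x : FreeGroup α) :
    |(lift (fun a => Multiplicative.ofAdd (f a)) x).toAdd| ≤ x.norm := by
  rw [← mk_toWord (x := x), lift_mk, norm, toWord_mk, reduce_toWord]
  induction x.toWord with
  | nil => simp
  | cons a L ih =>
    rw [List.map_cons, List.prod_cons, toAdd_mul, List.length_cons, Nat.cast_succ]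
    have ha : |(cond a.2 (Multiplicative.ofAdd (f a.1)) (Multiplicative.ofAdd (f a.1))⁻¹).toAdd|
        ≤ 1 := by
      cases a.2 <;> simp [hf]
    exact (abs_add_le _ _).trans (by linarith)

end FreeGroup

section WordNorm

variable {A G : Type*} [DecidableEq A] [Group G] {π : FreeGroup A →* G}

theorem wordNorm_le_norm {w : FreeGroup A} {g : G} (h : π w = g) : wordNorm π g ≤ w.norm :=
  Nat.sInf_le ⟨w, h, rfl⟩

theorem exists_norm_eq_wordNorm (hπ : Function.Surjective π) (g : G) :
    ∃ w, π w = g ∧ w.norm = wordNorm π g :=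
  Nat.sInf_mem (s := {n | ∃ w, π w = g ∧ w.norm = n}) <| by
    obtain ⟨w, hw⟩ := hπ g
    exact ⟨w.norm, w, hw, rfl⟩

end WordNorm

theorem npow_natCast (d : ℕ) : npow d = fun n => n ^ d := by
  funext n
  rw [npow, Real.rpow_natCast, ← Nat.cast_pow, Nat.ceil_natCast]

theorem simEq_npow_of_le_of_pow_le {f : ℕ → ℕ} {d B : ℕ} (hle : ∀ n, f n ≤ n ^ d)
    (hge : ∀ {n N}, B * n ≤ N → n ^ d ≤ f N) : SimEq f (npow d) := by
  rw [npow_natCast]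
  refine ⟨⟨1, 1, 1, one_pos, one_pos, one_pos, fun n => ?_⟩,
    ⟨1, B + 1, 1, one_pos, by omega, one_pos, fun n => ?_⟩⟩
  · simpa using (hle n).trans (Nat.pow_le_pow_left (by omega) d)
  · simpa using hge (by nlinarith : B * n ≤ (B + 1) * n + 1)

/-- The rounding in `f n / n` is absorbed by `f n / n ≥ 1`. -/
theorem simEq_div_self_npow {f : ℕ → ℕ} {d B : ℕ} (hle : ∀ n, f n ≤ n ^ (d + 1))
    (hge : ∀ {n N}, B * n ≤ N → n ^ (d + 1) ≤ f N) (hself : ∀ n, n ≤ f n) :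
    SimEq (fun n => f n / n) (npow d) := by
  rw [npow_natCast]
  refine ⟨⟨1, 1, 1, one_pos, one_pos, one_pos, fun n => ?_⟩,
    ⟨2 * (B + 1), B + 1, B + 1, by omega, by omega, by omega, fun n => ?_⟩⟩
  · rw [one_mul, one_mul]
    refine Nat.div_le_of_le_mul ((hle n).trans ?_)
    rw [pow_succ']
    exact Nat.mul_le_mul_left n (Nat.pow_le_pow_left (by omega) d)
  · set M := (B + 1) * n + (B + 1)
    have hM : M = (B + 1) * (n + 1) := by ring
    have hMpos : 0 < M := by positivity
    have h₁ : (n + 1) ^ (d + 1) ≤ f M := hge (by rw [hM]; nlinarith)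
    have h₂ : f M < (f M / M + 1) * M := by
      have := Nat.lt_div_mul_add (a := f M) hMpos
      linarith
    have h₃ : 1 ≤ f M / M := (Nat.one_le_div_iff hMpos).2 (hself M)
    have h₄ : (n + 1) ^ d < (f M / M + 1) * (B + 1) := by
      refine lt_of_mul_lt_mul_right (a := n + 1) ?_ (Nat.zero_le _)
      calc (n + 1) ^ d * (n + 1) = (n + 1) ^ (d + 1) := (pow_succ _ _).symm
        _ ≤ f M := h₁
        _ < (f M / M + 1) * M := h₂
        _ = (f M / M + 1) * (B + 1) * (n + 1) := by rw [hM]; ring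
    calc n ^ d ≤ (n + 1) ^ d := Nat.pow_le_pow_left (by omega) d
      _ ≤ (f M / M + 1) * (B + 1) := h₄.le
      _ ≤ 2 * (B + 1) * (f M / M) := by nlinarith

/-- Writing `1 - (1 - x) ^ n = x * A` with `A = ∑ i < n, (1 - x) ^ i ≡ n (mod x)`, the power
`(x * A) ^ k` is `x ^ k * n ^ k` modulo `x ^ (k + 1)`. -/
theorem pow_succ_dvd_one_sub_one_sub_pow_pow_sub {R : Type*} [CommRing R] (x : R) (n k : ℕ) :
    x ^ (k + 1) ∣ (1 - (1 - x) ^ n) ^ k - (n * x) ^ k := by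
  set A := ∑ i ∈ Finset.range n, (1 - x) ^ i
  have hA : 1 - (1 - x) ^ n = x * A := by rw [← mul_neg_geom_sum, sub_sub_cancel]
  have hAn : x ∣ A - n := by
    rw [show A - n = ∑ i ∈ Finset.range n, ((1 - x) ^ i - 1 ^ i) by simp [A]]
    refine Finset.dvd_sum fun i _ => ?_
    have := sub_dvd_pow_sub_pow (1 - x) 1 i
    rwa [sub_sub_cancel_left, neg_dvd] at this
  rw [hA, mul_pow, mul_pow, mul_comm ((n : R) ^ k), ← mul_sub, pow_succ]
  exact mul_dvd_mul_left _ (hAn.trans (sub_dvd_pow_sub_pow _ _ k))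

theorem exists_one_sub_one_sub_pow_pow_eq {R : Type*} [Ring R] (N : R) (n k : ℕ) :
    ∃ r : R, (1 - (1 - N) ^ n) ^ k = (n : R) ^ k * N ^ k + r * N ^ (k + 1) := by
  obtain ⟨D, hD⟩ := pow_succ_dvd_one_sub_one_sub_pow_pow_sub (Polynomial.X : Polynomial ℤ) n k
  refine ⟨Polynomial.aeval N D, ?_⟩
  have := congrArg (Polynomial.aeval N) (sub_eq_iff_eq_add.1 (hD.trans (mul_comm _ _)))
  simpa [(Nat.cast_commute n N).mul_pow, add_comm] using this

theorem pow_succ_add_succ_pow_le (a j : ℕ) :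
    (a : ℤ) ^ (j + 1) + (a + 1) ^ j ≤ (a + 1) ^ (j + 1) := by
  have h : (a : ℤ) ^ j * a ≤ (a + 1) ^ j * a :=
    mul_le_mul_of_nonneg_right (pow_le_pow_left₀ (by positivity) (by linarith) j) (by positivity)
  rw [pow_succ, pow_succ]
  linarith

namespace Gc

variable {c : ℕ}

local notation "zG" => PresentedGroup.mk (GcRels c) (zword c)

def shift : Module.End ℤ (Fin c → ℤ) where
  toFun v j := if h : (j : ℕ) = 0 then 0 else v ⟨j - 1, by omega⟩
  map_add' v w := by ext j; by_cases h : (j : ℕ) = 0 <;> simp [h]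
  map_smul' m v := by ext j; by_cases h : (j : ℕ) = 0 <;> simp [h]

theorem shift_apply (v : Fin c → ℤ) (j : Fin c) :
    shift v j = if h : (j : ℕ) = 0 then 0 else v ⟨j - 1, by omega⟩ :=
  rfl

theorem shift_pow_apply_of_lt (v : Fin c → ℤ) {k : ℕ} {j : Fin c} (hj : (j : ℕ) < k) :
    (shift ^ k) v j = 0 := by
  induction k generalizing j with
  | zero => omega
  | succ k ih =>
    rw [pow_succ', Module.End.mul_apply, shift_apply]
    split_ifs with h
    · rfl
    · exact ih (by simp; omega)

theorem isNilpotent_shift : IsNilpotent (shift : Module.End ℤ (Fin c → ℤ)) :=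
  ⟨c, LinearMap.ext fun v => funext fun j => shift_pow_apply_of_lt v j.2⟩

theorem shift_single {i j : Fin c} (h : (j : ℕ) = i + 1) :
    shift (Pi.single i 1) = Pi.single j (1 : ℤ) := by
  ext l
  rw [shift_apply]
  split_ifs with hl
  · rw [Pi.single_eq_of_ne (by omega)]
  · simp only [Pi.single_apply, Fin.ext_iff]
    congr 1
    exact propext (by omega)

theorem shift_single_of_eq_last {i : Fin c} (h : (i : ℕ) = c - 1) :
    shift (Pi.single i 1) = (0 : Fin c → ℤ) := by
  ext l
  rw [shift_apply]
  split_ifs with hl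
  · rfl
  · exact Pi.single_eq_of_ne (by rw [ne_eq, Fin.ext_iff]; simp only; omega) _

noncomputable def unipotent : Equiv.Perm (Fin c → ℤ) :=
  Equiv.ofBijective _ ((Module.End.isUnit_iff _).1 isNilpotent_shift.isUnit_one_sub)

theorem unipotent_apply (v : Fin c → ℤ) : unipotent v = v - shift v :=
  rfl

theorem commutatorElement_addLeft_unipotent (v : Fin c → ℤ) :
    ⁅Equiv.addLeft v, unipotent⁆ = Equiv.addLeft (shift v) := by
  ext1 u
  obtain ⟨w, rfl⟩ := unipotent.surjective u
  simp only [commutatorElement_def, Equiv.Perm.mul_apply, Equiv.Perm.coe_inv,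
    Equiv.symm_apply_apply, Equiv.neg_addLeft, Equiv.coe_addLeft]
  simp only [unipotent_apply, map_add, map_neg]
  abel

noncomputable def gcPerm : GcGen c → Equiv.Perm (Fin c → ℤ)
  | some i => Equiv.addLeft (Pi.single i 1)
  | none => unipotent

theorem lift_gcPerm_eq_one_of_mem_rels {r : FreeGroup (GcGen c)} (hr : r ∈ GcRels c) :
    FreeGroup.lift gcPerm r = 1 := by
  rcases hr with ⟨i, j, rfl⟩ | ⟨i, hi, rfl⟩ | ⟨i, j, hj, rfl⟩ <;>
    simp only [map_mul, map_inv, map_commutatorElement, FreeGroup.lift_apply_of, gcPerm]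
  · rw [commutatorElement_eq_one_iff_commute, Commute, SemiconjBy, ← Equiv.addLeft_add,
      ← Equiv.addLeft_add, add_comm]
  · rw [commutatorElement_addLeft_unipotent, shift_single_of_eq_last hi, Equiv.addLeft_zero]
  · rw [commutatorElement_addLeft_unipotent, shift_single hj, mul_inv_cancel]

noncomputable def gcRep (c : ℕ) : PresentedGroup (GcRels c) →* Equiv.Perm (Fin c → ℤ) :=
  PresentedGroup.toGroup fun _ => lift_gcPerm_eq_one_of_mem_rels

theorem zword_of_pos (hc : 0 < c) : zword c = FreeGroup.of (some ⟨c - 1, by omega⟩) :=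
  dif_pos hc

theorem gcRep_mk (w : FreeGroup (GcGen c)) :
    gcRep c (PresentedGroup.mk (GcRels c) w) = FreeGroup.lift gcPerm w :=
  rfl

theorem gcRep_zpow_apply_zero (hc : 0 < c) (m : ℤ) :
    gcRep c (zG ^ m) 0 = Pi.single ⟨c - 1, by omega⟩ m := by
  rw [map_zpow, gcRep_mk, zword_of_pos hc, FreeGroup.lift_apply_of, gcPerm,
    Equiv.zsmul_addLeft]
  ext j
  simp [Pi.single_apply]

theorem zpow_zword_injective (hc : 0 < c) : Function.Injective fun m : ℤ => zG ^ m := by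
  intro m m' h
  have := congrArg (fun g => gcRep c g 0 ⟨c - 1, by omega⟩) h
  simpa only [gcRep_zpow_apply_zero hc, Pi.single_eq_same] using this

def PowBounded (a : ℕ) (v : Fin c → ℤ) : Prop :=
  ∀ j : Fin c, |v j| ≤ (a : ℤ) ^ ((j : ℕ) + 1)

theorem abs_shift_apply_le {v : Fin c → ℤ} {b : ℤ} {j : Fin c}
    (h : ∀ i : Fin c, i < j → |v i| ≤ b ^ ((i : ℕ) + 1)) : |shift v j| ≤ b ^ (j : ℕ) := by
  rw [shift_apply]
  split_ifs with hj
  · simp [hj]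
  · have := h ⟨j - 1, by omega⟩ (Fin.lt_def.2 (by simp only; omega))
    rwa [Nat.sub_add_cancel (by omega)] at this

theorem PowBounded.single_add {a : ℕ} {v : Fin c → ℤ} (hv : PowBounded a v) (i : Fin c)
    {s : ℤ} (hs : |s| ≤ 1) : PowBounded (a + 1) (Pi.single i s + v) := by
  intro j
  have h₁ : |(Pi.single i s : Fin c → ℤ) j| ≤ 1 := by
    rw [Pi.single_apply]; split_ifs <;> simp [hs]
  have h₂ : (1 : ℤ) ≤ (a + 1) ^ (j : ℕ) := one_le_pow₀ (by linarith)
  have := pow_succ_add_succ_pow_le a j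
  push_cast
  calc |((Pi.single i s : Fin c → ℤ) + v) j| ≤ |(Pi.single i s : Fin c → ℤ) j| + |v j| :=
        abs_add_le _ _
    _ ≤ _ := by linarith [hv j]

theorem PowBounded.sub_shift {a : ℕ} {v : Fin c → ℤ} (hv : PowBounded a v) :
    PowBounded (a + 1) (v - shift v) := by
  intro j
  have h₁ : |shift v j| ≤ (a : ℤ) ^ (j : ℕ) := abs_shift_apply_le fun i _ => hv i
  have h₂ : (a : ℤ) ^ (j : ℕ) ≤ (a + 1) ^ (j : ℕ) :=
    pow_le_pow_left₀ (by positivity) (by linarith) _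
  have := pow_succ_add_succ_pow_le a j
  push_cast
  calc |(v - shift v) j| ≤ |v j| + |shift v j| := abs_sub _ _
    _ ≤ _ := by linarith [hv j]

/-- A preimage under `1 - shift` is recovered coordinate by coordinate as
`v j = (v - shift v) j + v (j - 1)`. -/
theorem PowBounded.of_sub_shift {a : ℕ} {v : Fin c → ℤ} (hv : PowBounded a (v - shift v)) :
    PowBounded (a + 1) v := by
  intro j
  induction j using WellFoundedLT.induction with
  | _ j ih =>
    have h₁ : |shift v j| ≤ ((a + 1 : ℕ) : ℤ) ^ (j : ℕ) := abs_shift_apply_le ih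
    have := pow_succ_add_succ_pow_le a j
    push_cast at h₁ ⊢
    calc |v j| = |(v - shift v) j + shift v j| := by simp
      _ ≤ |(v - shift v) j| + |shift v j| := abs_add_le _ _
      _ ≤ _ := by linarith [hv j]

theorem PowBounded.gcPerm_letter {a : ℕ} {v : Fin c → ℤ} (hv : PowBounded a v)
    (x : GcGen c × Bool) : PowBounded (a + 1) ((cond x.2 (gcPerm x.1) (gcPerm x.1)⁻¹) v) := by
  obtain ⟨_ | i, _ | _⟩ := x
  · apply PowBounded.of_sub_shift
    rw [← unipotent_apply]
    simpa [gcPerm] using hv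
  · exact hv.sub_shift
  · simpa [gcPerm, Pi.single_neg] using hv.single_add i (s := -1) (by simp)
  · simpa [gcPerm] using hv.single_add i (s := 1) (by simp)

theorem powBounded_lift_gcPerm_apply_zero (w : FreeGroup (GcGen c)) :
    PowBounded w.norm (FreeGroup.lift gcPerm w 0) := by
  rw [← FreeGroup.mk_toWord (x := w), FreeGroup.lift_mk, FreeGroup.norm, FreeGroup.toWord_mk,
    FreeGroup.reduce_toWord]
  induction w.toWord with
  | nil => intro j; simp
  | cons x L ih =>
    rw [List.map_cons, List.prod_cons, Equiv.Perm.mul_apply]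
    exact ih.gcPerm_letter x

theorem natAbs_le_pow_of_gDist_zpow_le (hc : 0 < c) {m : ℤ} {n : ℕ}
    (h : gDist (GcRels c) (zG ^ m) ≤ n) : m.natAbs ≤ n ^ c := by
  obtain ⟨w, hw, hnorm⟩ := exists_norm_eq_wordNorm (PresentedGroup.mk_surjective _) (zG ^ m)
  have hb := powBounded_lift_gcPerm_apply_zero w ⟨c - 1, by omega⟩
  rw [← gcRep_mk, hw, gcRep_zpow_apply_zero hc, Pi.single_eq_same,
    Nat.sub_add_cancel hc] at hb
  have : w.norm ≤ n := hnorm.trans_le h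
  zify
  calc |m| ≤ (w.norm : ℤ) ^ c := hb
    _ ≤ (n : ℤ) ^ c := pow_le_pow_left₀ (by positivity) (by exact_mod_cast this) c

def xG (i : Fin c) : PresentedGroup (GcRels c) := PresentedGroup.of (some i)

def tG (c : ℕ) : PresentedGroup (GcRels c) := PresentedGroup.of none

theorem xG_commute (i j : Fin c) : Commute (xG i) (xG j) := by
  have : PresentedGroup.mk (GcRels c) ⁅FreeGroup.of (some i), FreeGroup.of (some j)⁆ = 1 :=
    PresentedGroup.one_of_mem (Or.inl ⟨i, j, rfl⟩)
  rwa [map_commutatorElement, commutatorElement_eq_one_iff_commute] at this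

theorem commutatorElement_xG_tG {i j : Fin c} (h : (j : ℕ) = i + 1) : ⁅xG i, tG c⁆ = xG j := by
  have : PresentedGroup.mk (GcRels c)
      (⁅FreeGroup.of (some i), FreeGroup.of none⁆ * (FreeGroup.of (some j))⁻¹) = 1 :=
    PresentedGroup.one_of_mem (Or.inr (Or.inr ⟨i, j, h, rfl⟩))
  rwa [map_mul, map_inv, map_commutatorElement, mul_inv_eq_one] at this

theorem commutatorElement_xG_tG_of_eq_last {i : Fin c} (h : (i : ℕ) = c - 1) :
    ⁅xG i, tG c⁆ = 1 := by
  have : PresentedGroup.mk (GcRels c) ⁅FreeGroup.of (some i), FreeGroup.of none⁆ = 1 :=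
    PresentedGroup.one_of_mem (Or.inr (Or.inl ⟨i, h, rfl⟩))
  rwa [map_commutatorElement] at this

def baseSubgroup (c : ℕ) : Subgroup (PresentedGroup (GcRels c)) :=
  Subgroup.closure (Set.range xG)

instance : IsMulCommutative (baseSubgroup c) :=
  Subgroup.isMulCommutative_closure <| by
    rintro _ ⟨i, rfl⟩ _ ⟨j, rfl⟩
    exact xG_commute i j

def xBase (i : Fin c) : baseSubgroup c := ⟨xG i, Subgroup.subset_closure ⟨i, rfl⟩⟩

theorem commutatorElement_xG_tG_mem (i : Fin c) : ⁅xG i, tG c⁆ ∈ baseSubgroup c := by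
  by_cases hi : (i : ℕ) + 1 < c
  · rw [commutatorElement_xG_tG (j := ⟨i + 1, hi⟩) rfl]
    exact (xBase _).2
  · rw [commutatorElement_xG_tG_of_eq_last (by omega)]
    exact one_mem _

theorem conj_tG_mem {k : PresentedGroup (GcRels c)} (hk : k ∈ baseSubgroup c) :
    tG c * k * (tG c)⁻¹ ∈ baseSubgroup c := by
  have : (baseSubgroup c).map (MulAut.conj (tG c)).toMonoidHom ≤ baseSubgroup c := by
    rw [baseSubgroup, MonoidHom.map_closure, Subgroup.closure_le]
    rintro _ ⟨_, ⟨i, rfl⟩, rfl⟩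
    have : tG c * xG i * (tG c)⁻¹ = ⁅xG i, tG c⁆⁻¹ * xG i := by
      rw [commutatorElement_def]; group
    change tG c * xG i * (tG c)⁻¹ ∈ baseSubgroup c
    rw [this]
    exact mul_mem (inv_mem (commutatorElement_xG_tG_mem i)) (xBase i).2
  exact this ⟨k, hk, rfl⟩

open scoped IsMulCommutative

def conjT : Module.End ℤ (Additive (baseSubgroup c)) :=
  (MonoidHom.toAdditive <|
    ((MulAut.conj (tG c)).toMonoidHom.comp (baseSubgroup c).subtype).codRestrict
      (baseSubgroup c) fun k => conj_tG_mem k.2).toIntLinearMap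

theorem additive_ext {a b : Additive (baseSubgroup c)}
    (h : (a.toMul : PresentedGroup (GcRels c)) = b.toMul) : a = b :=
  Additive.toMul.injective (Subtype.ext h)

theorem coe_toMul_conjT_pow_apply (n : ℕ) (a : Additive (baseSubgroup c)) :
    (((conjT ^ n) a).toMul : PresentedGroup (GcRels c)) =
      tG c ^ n * a.toMul * (tG c ^ n)⁻¹ := by
  induction n with
  | zero => simp
  | succ n ih =>
    rw [pow_succ', Module.End.mul_apply]
    change tG c * (baseSubgroup c).subtype _ * (tG c)⁻¹ = _
    rw [Subgroup.coe_subtype, ih]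
    group

theorem coe_toMul_one_sub_conjT_pow_apply (n : ℕ) (a : Additive (baseSubgroup c)) :
    (((1 - conjT ^ n) a).toMul : PresentedGroup (GcRels c)) =
      ⁅(a.toMul : PresentedGroup (GcRels c)), tG c ^ n⁆ := by
  rw [LinearMap.sub_apply, toMul_sub, Subgroup.coe_div, Module.End.one_apply,
    coe_toMul_conjT_pow_apply, commutatorElement_def]
  simp only [div_eq_mul_inv, mul_inv_rev, inv_inv, mul_assoc]

theorem one_sub_conjT_apply_xBase {i j : Fin c} (h : (j : ℕ) = i + 1) :
    (1 - conjT) (Additive.ofMul (xBase i)) = Additive.ofMul (xBase j) :=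
  additive_ext <| by
    rw [← pow_one conjT, coe_toMul_one_sub_conjT_pow_apply, pow_one]
    exact commutatorElement_xG_tG h

theorem one_sub_conjT_apply_xBase_of_eq_last {i : Fin c} (h : (i : ℕ) = c - 1) :
    (1 - conjT) (Additive.ofMul (xBase i)) = 0 :=
  additive_ext <| by
    rw [← pow_one conjT, coe_toMul_one_sub_conjT_pow_apply, pow_one]
    exact commutatorElement_xG_tG_of_eq_last h

theorem one_sub_conjT_pow_apply_xBase (m : ℕ) {i j : Fin c} (h : (j : ℕ) = i + m) :
    ((1 - conjT) ^ m) (Additive.ofMul (xBase i)) = Additive.ofMul (xBase j) := by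
  induction m generalizing i with
  | zero => rw [pow_zero, Module.End.one_apply, Fin.ext (h.trans (add_zero _)).symm]
  | succ m ih =>
    rw [pow_succ, Module.End.mul_apply,
      one_sub_conjT_apply_xBase (j := ⟨i + 1, by omega⟩) rfl, ih (by simp only; omega)]

/-- With `N = 1 - conjT` we have `N ^ (c - 1) x_1 = x_c = z`, `N ^ c x_1 = 0` and
`1 - conjT ^ n = 1 - (1 - N) ^ n`, so `exists_one_sub_one_sub_pow_pow_eq` applies. -/
theorem one_sub_conjT_pow_pow_apply (hc : 0 < c) (n : ℕ) :
    ((1 - conjT ^ n) ^ (c - 1)) (n • Additive.ofMul (xBase ⟨0, hc⟩)) =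
      (n ^ c) • Additive.ofMul (xBase ⟨c - 1, by omega⟩) := by
  obtain ⟨r, hr⟩ := exists_one_sub_one_sub_pow_pow_eq (1 - conjT (c := c)) n (c - 1)
  have hlast := one_sub_conjT_pow_apply_xBase (c - 1) (i := ⟨0, hc⟩) (j := ⟨c - 1, by omega⟩)
    (by simp)
  rw [sub_sub_cancel] at hr
  rw [hr, LinearMap.add_apply, Module.End.mul_apply, Module.End.mul_apply, pow_succ',
    Module.End.mul_apply, map_nsmul, map_nsmul, hlast, map_nsmul,
    one_sub_conjT_apply_xBase_of_eq_last rfl, smul_zero, map_zero, add_zero, ← Nat.cast_pow,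
    Module.End.natCast_apply, smul_smul, ← pow_succ', Nat.sub_add_cancel hc]

def commWord (hc : 0 < c) (n : ℕ) : ℕ → FreeGroup (GcGen c)
  | 0 => FreeGroup.of (some ⟨0, hc⟩) ^ n
  | j + 1 => ⁅commWord hc n j, FreeGroup.of none ^ n⁆

theorem norm_commWord_le (hc : 0 < c) (n j : ℕ) : (commWord hc n j).norm ≤ 4 ^ j * n := by
  induction j with
  | zero => simp [commWord, FreeGroup.norm_of_pow]
  | succ j ih =>
    have h := FreeGroup.norm_commutatorElement_le (commWord hc n j) (FreeGroup.of none ^ n)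
    have hn : n ≤ 4 ^ j * n := Nat.le_mul_of_pos_left n (by positivity)
    rw [FreeGroup.norm_of_pow] at h
    rw [commWord, pow_succ]
    linarith

theorem mk_commWord (hc : 0 < c) (n j : ℕ) :
    PresentedGroup.mk (GcRels c) (commWord hc n j) =
      ((((1 - conjT ^ n) ^ j) (n • Additive.ofMul (xBase ⟨0, hc⟩))).toMul :
        PresentedGroup (GcRels c)) := by
  induction j with
  | zero => rfl
  | succ j ih =>
    rw [commWord, map_commutatorElement, ih, map_pow, pow_succ', Module.End.mul_apply,
      coe_toMul_one_sub_conjT_pow_apply]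
    rfl

theorem gDist_zpow_pow_le (hc : 0 < c) (n : ℕ) :
    gDist (GcRels c) (zG ^ ((n ^ c : ℕ) : ℤ)) ≤ 4 ^ (c - 1) * n := by
  refine (wordNorm_le_norm ?_).trans (norm_commWord_le hc n (c - 1))
  rw [mk_commWord, one_sub_conjT_pow_pow_apply, toMul_nsmul, toMul_ofMul, SubgroupClass.coe_pow,
    zword_of_pos hc, zpow_natCast]
  rfl

theorem gDist_zpow_le (hc : 0 < c) (m : ℕ) : gDist (GcRels c) (zG ^ (m : ℤ)) ≤ m := by
  rw [zword_of_pos hc, zpow_natCast, ← map_pow]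
  exact (wordNorm_le_norm rfl).trans_eq (FreeGroup.norm_of_pow _ _)

theorem hsub_bz_eq_zpowers (hc : 0 < c) : Hsub (GcRels c) (Bz c) = Subgroup.zpowers zG := by
  have hB : Bz c = {some ⟨c - 1, by omega⟩} := by
    ext x
    simp only [Bz, Set.mem_ofPred_eq, Set.mem_singleton_iff]
    constructor
    · rintro ⟨i, hi, rfl⟩
      exact congrArg some (Fin.ext hi)
    · rintro rfl
      exact ⟨_, rfl, rfl⟩
  rw [Hsub, hB, Set.image_singleton, Set.image_singleton, ← zword_of_pos hc,
    Subgroup.zpowers_eq_closure]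

theorem subDist_zpow (hc : 0 < c) (m : ℤ) : subDist (GcRels c) (Bz c) (zG ^ m) = m.natAbs := by
  have hπ : (PresentedGroup.mk (GcRels c)).comp (FreeGroup.map (Subtype.val : Bz c → GcGen c)) =
      (zpowersHom _ zG).comp (FreeGroup.lift fun _ => Multiplicative.ofAdd 1) := by
    ext ⟨_, i, hi, rfl⟩
    simp [zword_of_pos hc, ← hi]
  rw [subDist, hπ]
  let b : Bz c := ⟨some ⟨c - 1, by omega⟩, _, rfl, rfl⟩
  have hb : (zpowersHom _ zG).comp (FreeGroup.lift fun _ => Multiplicative.ofAdd 1)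
      (FreeGroup.of b ^ m) = zG ^ m := by
    simp
  refine le_antisymm ((wordNorm_le_norm hb).trans_eq (FreeGroup.norm_of_zpow b m)) ?_
  refine le_csInf ⟨_, _, hb, rfl⟩ ?_
  rintro _ ⟨w, hw, rfl⟩
  have := FreeGroup.abs_toAdd_lift_le_norm (fun _ => 1) (fun _ => by simp) w
  rw [zpow_zword_injective hc hw, Int.abs_eq_natAbs] at this
  exact_mod_cast this

noncomputable def maxZExp (c n : ℕ) : ℕ :=
  sSup {k : ℕ | ∃ m : ℤ, m.natAbs = k ∧
    gDist (GcRels c) (PresentedGroup.mk (GcRels c) (zword c) ^ m) ≤ n}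

theorem maxZExp_le_pow (hc : 0 < c) (n : ℕ) : maxZExp c n ≤ n ^ c :=
  csSup_le' <| by
    rintro _ ⟨m, rfl, h⟩
    exact natAbs_le_pow_of_gDist_zpow_le hc h

theorem natAbs_le_maxZExp (hc : 0 < c) {m : ℤ} {n : ℕ} (h : gDist (GcRels c) (zG ^ m) ≤ n) :
    m.natAbs ≤ maxZExp c n :=
  le_csSup ⟨n ^ c, by rintro _ ⟨m, rfl, h⟩; exact natAbs_le_pow_of_gDist_zpow_le hc h⟩ ⟨m, rfl, h⟩

theorem pow_le_maxZExp (hc : 0 < c) {n N : ℕ} (h : 4 ^ (c - 1) * n ≤ N) :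
    n ^ c ≤ maxZExp c N := by
  simpa using natAbs_le_maxZExp hc ((gDist_zpow_pow_le hc n).trans h)

theorem le_maxZExp (hc : 0 < c) (n : ℕ) : n ≤ maxZExp c n := by
  simpa using natAbs_le_maxZExp hc (gDist_zpow_le hc n)

theorem distortion_eq_maxZExp_div (hc : 0 < c) (n : ℕ) :
    distortion (GcRels c) (Bz c) n = maxZExp c n / n := by
  rw [distortion, maxZExp, hsub_bz_eq_zpowers hc]
  congr 2
  ext k
  constructor
  · rintro ⟨_, ⟨m, rfl⟩, hd, rfl⟩
    exact ⟨m, (subDist_zpow hc m).symm, hd⟩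
  · rintro ⟨m, rfl, hd⟩
    exact ⟨_, ⟨m, rfl⟩, hd, subDist_zpow hc m⟩

end Gc

theorem stmt13 (c : ℕ) (hc : 1 ≤ c) :
    SimEq (distortion (GcRels c) (Bz c)) (npow ((c : ℝ) - 1)) ∧
    SimEq (fun n => sSup {k : ℕ | ∃ m : ℤ, m.natAbs = k ∧
        gDist (GcRels c) (PresentedGroup.mk (GcRels c) (zword c) ^ m) ≤ n})
      (npow (c : ℝ)) := by
  refine ⟨?_, simEq_npow_of_le_of_pow_le (Gc.maxZExp_le_pow hc) (Gc.pow_le_maxZExp hc)⟩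
  obtain ⟨d, rfl⟩ : ∃ d, c = d + 1 := ⟨c - 1, by omega⟩
  rw [funext (Gc.distortion_eq_maxZExp_div hc), show ((d + 1 : ℕ) : ℝ) - 1 = d by simp]
  exact simEq_div_self_npow (Gc.maxZExp_le_pow hc) (Gc.pow_le_maxZExp hc) (Gc.le_maxZExp hc)
end

section
/- Let ⟨𝒜, 𝒜′ ∣ ℛ, ℛ′, [a, a′] = 1 ∀ a ∈ 𝒜 ∀ a′ ∈ 𝒜′⟩ be the cartesian product of the presentations ⟨𝒜 ∣ ℛ⟩ and ⟨𝒜′ ∣ ℛ′⟩, and let w be a null-homotopic word for the product presentation. Let w_1 be the word obtained from w by deleting all occurrences of letters in 𝒜′^{±1} and w_2 the word obtained by deleting all occurrences of letters in 𝒜^{±1}. Then w_1 is null-homotopic for ⟨𝒜 ∣ ℛ⟩, w_2 is null-homotopic for ⟨𝒜′ ∣ ℛ′⟩, and diam(w) ≤ max{|w_1|, |w_2|, diam(w_1), diam(w_2)}. -/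
/-! # Common definitions: words, presentations, area, Dehn functions,
isodiametric functions, word metrics and distortion. -/

open scoped commutatorElement

/-!
Deleting the letters of `𝒜′` (resp. `𝒜`) is a homomorphism that kills `ℛ′` (resp. `ℛ`) and every
commutator relator, so `w₁` and `w₂` are null-homotopic. For the diameter, bubble-sort `w` into
`w₁ w₂`: each swap of adjacent letters `y x` with `y ∈ 𝒜′^{±1}`, `x ∈ 𝒜^{±1}` costs one commutator
cell, which may be attached in front of or behind the word. The word length never changes, and on
the cheaper side the conjugator has length at most `|w| / 2 ≤ max(|w₁|, |w₂|)`. Writing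
`w = a (w₁ w₂) b` with `a`, `b` products of such cells (a double coset membership), it remains to
fill `w₁ w₂` by minimal-diameter fillings of `w₁` and `w₂`.
-/

section BoundedConjClosure

variable {α β : Type*} [DecidableEq α] [DecidableEq β]

theorem FreeGroup.norm_map_le (f : α → β) (x : FreeGroup α) : (map f x).norm ≤ x.norm := by
  conv_lhs => rw [← mk_toWord (x := x), map.mk]
  exact norm_mk_le.trans_eq (List.length_map _)

/-- `diamOf R w` is the least `D` with `w ∈ boundedConjClosure R D` (`diamOf_eq_sInf`). -/
def boundedConjClosure (R : Set (FreeGroup α)) (D : ℕ) : Subgroup (FreeGroup α) :=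
  Subgroup.closure {x | ∃ g : FreeGroup α, g.norm ≤ D ∧ ∃ r ∈ R, x = g⁻¹ * r * g}

variable {R R' : Set (FreeGroup α)} {D D' : ℕ} {w : FreeGroup α}

theorem mem_boundedConjClosure_iff : w ∈ boundedConjClosure R D ↔
    ∃ (N : ℕ) (g r : Fin N → FreeGroup α), (∀ i, r i ∈ R ∨ (r i)⁻¹ ∈ R) ∧
      w = (List.ofFn fun i => (g i)⁻¹ * r i * g i).prod ∧ ∀ i, (g i).norm ≤ D := by
  constructor
  · intro hw
    rw [← Subgroup.mem_toSubmonoid, boundedConjClosure, Subgroup.closure_toSubmonoid] at hw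
    obtain ⟨l, hl, rfl⟩ := Submonoid.exists_list_of_mem_closure hw
    have hcell : ∀ x ∈ l, ∃ g r : FreeGroup α,
        (r ∈ R ∨ r⁻¹ ∈ R) ∧ x = g⁻¹ * r * g ∧ g.norm ≤ D := by
      intro x hx
      rcases hl x hx with ⟨g, hg, r, hr, rfl⟩ | ⟨g, hg, r, hr, hx⟩
      · exact ⟨g, r, .inl hr, rfl, hg⟩
      · refine ⟨g, r⁻¹, .inr ((inv_inv r).symm ▸ hr), ?_, hg⟩
        rw [← inv_inv x, hx]
        group
    choose g r hr hx hg using fun i : Fin l.length => hcell _ (l.get_mem i)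
    refine ⟨l.length, g, r, hr, ?_, hg⟩
    conv_lhs => rw [← List.ofFn_get l]
    exact congrArg List.prod (List.ofFn_inj.2 (funext hx))
  · rintro ⟨N, g, r, hr, rfl, hg⟩
    refine Subgroup.list_prod_mem _ fun x hx => ?_
    obtain ⟨i, rfl⟩ := List.mem_ofFn.1 hx
    rcases hr i with hri | hri
    · exact Subgroup.subset_closure ⟨g i, hg i, r i, hri, rfl⟩
    · rw [← inv_inv (r i), ← inv_mem_iff]
      refine Subgroup.subset_closure ⟨g i, hg i, (r i)⁻¹, hri, ?_⟩
      group

theorem diamOf_eq_sInf : diamOf R w = sInf {D | w ∈ boundedConjClosure R D} := by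
  simp only [mem_boundedConjClosure_iff]
  rfl

theorem diamOf_le_of_mem_boundedConjClosure (hw : w ∈ boundedConjClosure R D) :
    diamOf R w ≤ D :=
  diamOf_eq_sInf (R := R) ▸ Nat.sInf_le hw

theorem boundedConjClosure_mono (hR : R ⊆ R') (hD : D ≤ D') :
    boundedConjClosure R D ≤ boundedConjClosure R' D' :=
  Subgroup.closure_mono fun _ ⟨g, hg, r, hr, hx⟩ => ⟨g, hg.trans hD, r, hR hr, hx⟩

theorem conj_mem_boundedConjClosure (h : FreeGroup α) (hw : w ∈ boundedConjClosure R D) :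
    h * w * h⁻¹ ∈ boundedConjClosure R (D + h.norm) := by
  have hmap : (boundedConjClosure R D).map (MulAut.conj h).toMonoidHom
      ≤ boundedConjClosure R (D + h.norm) := by
    rw [boundedConjClosure, MonoidHom.map_closure]
    refine Subgroup.closure_mono ?_
    rintro _ ⟨_, ⟨g, hg, r, hr, rfl⟩, rfl⟩
    refine ⟨g * h⁻¹, ?_, r, hr, by simp [mul_assoc]⟩
    calc (g * h⁻¹).norm ≤ g.norm + h⁻¹.norm := FreeGroup.norm_mul_le _ _
      _ ≤ D + h.norm := by rw [FreeGroup.norm_inv_eq]; omega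
  exact hmap ⟨w, hw, rfl⟩

theorem map_boundedConjClosure_le (f : α → β) :
    (boundedConjClosure R D).map (FreeGroup.map f)
      ≤ boundedConjClosure (FreeGroup.map f '' R) D := by
  rw [boundedConjClosure, MonoidHom.map_closure]
  refine Subgroup.closure_mono ?_
  rintro _ ⟨_, ⟨g, hg, r, hr, rfl⟩, rfl⟩
  exact ⟨FreeGroup.map f g, (FreeGroup.norm_map_le f g).trans hg, _, ⟨r, hr, rfl⟩, by simp⟩

theorem NullHomotopic.exists_mem_boundedConjClosure (hw : NullHomotopic R w) :
    ∃ D, w ∈ boundedConjClosure R D := by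
  refine Subgroup.closure_induction (fun x hx => ?_) ⟨0, one_mem _⟩
    (fun x y _ _ ⟨D, hx⟩ ⟨D', hy⟩ => ⟨max D D', mul_mem
      (boundedConjClosure_mono subset_rfl (le_max_left D D') hx)
      (boundedConjClosure_mono subset_rfl (le_max_right D D') hy)⟩)
    (fun x _ ⟨D, hx⟩ => ⟨D, inv_mem hx⟩) hw
  obtain ⟨r, hr, hconj⟩ := Group.mem_conjugatesOfSet_iff.1 hx
  obtain ⟨c, rfl⟩ := isConj_iff.1 hconj
  exact ⟨c⁻¹.norm, Subgroup.subset_closure ⟨c⁻¹, le_rfl, r, hr, by group⟩⟩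

theorem NullHomotopic.mem_boundedConjClosure_diamOf (hw : NullHomotopic R w) :
    w ∈ boundedConjClosure R (diamOf R w) := by
  rw [diamOf_eq_sInf]
  exact Nat.sInf_mem hw.exists_mem_boundedConjClosure

end BoundedConjClosure

section Projections

variable {α β : Type*}

open FreeGroup

theorem FreeGroup.mk_cons (a : α × Bool) (L : List (α × Bool)) : mk (a :: L) = mk [a] * mk L :=
  (mul_mk (L₁ := [a])).symm

theorem FreeGroup.lift_ite_of_mk (p : α → Bool) (L : List (α × Bool)) :
    lift (fun a => if p a then of a else 1) (mk L) = mk (L.filter (p ·.1)) := by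
  induction L with
  | nil => rfl
  | cons a L ih =>
    rw [mk_cons, _root_.map_mul, ih, List.filter_cons]
    obtain ⟨x, b⟩ := a
    cases hp : p x
    · simp [lift_mk, hp]
    · rw [if_pos rfl, mk_cons]
      cases b <;> simp [lift_mk, hp] <;> rfl

theorem FreeGroup.mk_singleton (a : α) (b : Bool) : mk [(a, b)] = cond b (of a) (of a)⁻¹ := by
  cases b <;> rfl

def commRels (α β : Type*) : Set (FreeGroup (α ⊕ β)) :=
  {r | ∃ (x : α) (y : β), r = ⁅of (Sum.inl x : α ⊕ β), of (Sum.inr y)⁆}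

theorem commRels_subset_prodRels (R : Set (FreeGroup α)) (R' : Set (FreeGroup β)) :
    commRels α β ⊆ ProdRels R R' :=
  Set.subset_union_right

@[simp]
theorem projL_of_inl (x : α) : projL (A' := β) (of (Sum.inl x)) = of x := by
  simp [projL]

@[simp]
theorem projL_of_inr (y : β) : projL (A := α) (of (Sum.inr y)) = 1 := by
  simp [projL]

@[simp]
theorem projR_of_inl (x : α) : projR (A' := β) (of (Sum.inl x)) = 1 := by
  simp [projR]

@[simp]
theorem projR_of_inr (y : β) : projR (A := α) (of (Sum.inr y)) = of y := by
  simp [projR]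

@[simp]
theorem projL_map_inl (z : FreeGroup α) : projL (A' := β) (map Sum.inl z) = z := by
  simpa using DFunLike.congr_fun
    (ext_hom ((projL (A' := β)).comp (map Sum.inl)) (.id _) fun x => by simp) z

@[simp]
theorem projL_map_inr (z : FreeGroup β) : projL (A := α) (map Sum.inr z) = 1 := by
  simpa using DFunLike.congr_fun
    (ext_hom ((projL (A := α)).comp (map Sum.inr)) 1 fun x => by simp) z

@[simp]
theorem projR_map_inl (z : FreeGroup α) : projR (A' := β) (map Sum.inl z) = 1 := by
  simpa using DFunLike.congr_fun
    (ext_hom ((projR (A' := β)).comp (map Sum.inl)) 1 fun x => by simp) z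

@[simp]
theorem projR_map_inr (z : FreeGroup β) : projR (A := α) (map Sum.inr z) = z := by
  simpa using DFunLike.congr_fun
    (ext_hom ((projR (A := α)).comp (map Sum.inr)) (.id _) fun x => by simp) z

theorem map_inl_projL_mk (L : List ((α ⊕ β) × Bool)) :
    map Sum.inl (projL (mk L)) = mk (L.filter (·.1.isLeft)) := by
  rw [← lift_ite_of_mk, ← MonoidHom.comp_apply]
  exact DFunLike.congr_fun (ext_hom _ _ fun s => by cases s <;> simp) (mk L)

theorem map_inr_projR_mk (L : List ((α ⊕ β) × Bool)) :
    map Sum.inr (projR (mk L)) = mk (L.filter (·.1.isRight)) := by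
  rw [← lift_ite_of_mk, ← MonoidHom.comp_apply]
  exact DFunLike.congr_fun (ext_hom _ _ fun s => by cases s <;> simp) (mk L)

theorem nullHomotopic_projL {R : Set (FreeGroup α)} {R' : Set (FreeGroup β)}
    {w : FreeGroup (α ⊕ β)} (hw : NullHomotopic (ProdRels R R') w) :
    NullHomotopic R (projL w) := by
  refine Subgroup.normalClosure_le_normal (N := (Subgroup.normalClosure R).comap projL) ?_ hw
  rintro _ ((⟨r, hr, rfl⟩ | ⟨r, hr, rfl⟩) | ⟨x, y, rfl⟩)
  · simpa using Subgroup.subset_normalClosure hr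
  · simp [one_mem]
  · simp [one_mem]

theorem nullHomotopic_projR {R : Set (FreeGroup α)} {R' : Set (FreeGroup β)}
    {w : FreeGroup (α ⊕ β)} (hw : NullHomotopic (ProdRels R R') w) :
    NullHomotopic R' (projR w) := by
  refine Subgroup.normalClosure_le_normal (N := (Subgroup.normalClosure R').comap projR) ?_ hw
  rintro _ ((⟨r, hr, rfl⟩ | ⟨r, hr, rfl⟩) | ⟨x, y, rfl⟩)
  · simp [one_mem]
  · simpa using Subgroup.subset_normalClosure hr
  · simp [one_mem]

end Projections

theorem DoubleCoset.mem_doubleCoset_trans {G : Type*} [Group G] {H K : Subgroup G} {a b c : G}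
    (hab : a ∈ doubleCoset b H K) (hbc : b ∈ doubleCoset c H K) : a ∈ doubleCoset c H K :=
  doubleCoset_eq_of_mem hbc ▸ hab

theorem List.length_filter_isLeft_add_isRight {α β γ : Type*} (l : List ((α ⊕ β) × γ)) :
    (l.filter (·.1.isLeft)).length + (l.filter (·.1.isRight)).length = l.length := by
  simp [List.length_eq_length_filter_add (l := l) (·.1.isLeft), Sum.bnot_isLeft]

section Sorting

variable {α β : Type*} [DecidableEq α] [DecidableEq β]

open FreeGroup
open DoubleCoset (doubleCoset mem_doubleCoset mem_doubleCoset_self mem_doubleCoset_trans)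

theorem commutatorElement_mk_mem_boundedConjClosure (x : α) (y : β) (e d : Bool) :
    ⁅(mk [(Sum.inr y, d)] : FreeGroup (α ⊕ β)), mk [(Sum.inl x, e)]⁆ ∈
      boundedConjClosure (commRels α β) ((!e).toNat + (!d).toNat) := by
  simp only [mk_singleton]
  set X : FreeGroup (α ⊕ β) := of (Sum.inl x)
  set Y : FreeGroup (α ⊕ β) := of (Sum.inr y)
  have cell : ∀ g : FreeGroup (α ⊕ β), g.norm ≤ (!e).toNat + (!d).toNat →
      g⁻¹ * ⁅X, Y⁆ * g ∈ boundedConjClosure (commRels α β) ((!e).toNat + (!d).toNat) :=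
    fun g hg => Subgroup.subset_closure ⟨g, hg, _, ⟨x, y, rfl⟩, rfl⟩
  cases e <;> cases d <;> simp only [cond_false, cond_true]
  · have hXY : (X * Y).norm ≤ 2 := (norm_mul_le X Y).trans (by simp [X, Y, norm_of])
    convert inv_mem (cell (X * Y) hXY) using 1
    simp only [commutatorElement_def]
    group
  · convert cell X (by simp [X, norm_of]) using 1
    simp only [commutatorElement_def]
    group
  · convert cell Y (by simp [Y, norm_of]) using 1
    simp only [commutatorElement_def]
    group
  · convert inv_mem (cell 1 (by simp)) using 1
    simp only [commutatorElement_def]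
    group

/-- The swap costs one commutator cell, attached in front (conjugated by `p` and up to two letters)
or behind (by `s⁻¹` and the complementary letters); the two conjugator lengths add up to at most
`n`, so the cheaper one is at most `n / 2`. -/
theorem mem_doubleCoset_swap (p s : FreeGroup (α ⊕ β)) (x : α) (e : Bool) (y : β) (d : Bool)
    {n : ℕ} (hn : p.norm + s.norm + 2 ≤ n) :
    p * mk [(Sum.inr y, d)] * mk [(Sum.inl x, e)] * s ∈
      doubleCoset (p * mk [(Sum.inl x, e)] * mk [(Sum.inr y, d)] * s)
        (boundedConjClosure (commRels α β) (n / 2)) (boundedConjClosure (commRels α β) (n / 2)) := by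
  set Y : FreeGroup (α ⊕ β) := mk [(Sum.inr y, d)]
  set X : FreeGroup (α ⊕ β) := mk [(Sum.inl x, e)]
  have hcost : (!e).toNat + (!d).toNat + ((!!e).toNat + (!!d).toNat) = 2 := by
    cases e <;> cases d <;> rfl
  rw [mem_doubleCoset]
  by_cases hfront : p.norm + ((!e).toNat + (!d).toNat) ≤ n / 2
  · have hcell := conj_mem_boundedConjClosure p (commutatorElement_mk_mem_boundedConjClosure x y e d)
    refine ⟨p * ⁅Y, X⁆ * p⁻¹, boundedConjClosure_mono subset_rfl (by omega) hcell,
      1, one_mem _, ?_⟩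
    simp only [commutatorElement_def]
    group
  · have hcell := conj_mem_boundedConjClosure s⁻¹
      (commutatorElement_mk_mem_boundedConjClosure x y (!e) (!d))
    rw [norm_inv_eq] at hcell
    refine ⟨1, one_mem _, s⁻¹ * ⁅Y⁻¹, X⁻¹⁆ * s⁻¹⁻¹,
      boundedConjClosure_mono subset_rfl (by omega) hcell, ?_⟩
    simp only [commutatorElement_def]
    group

theorem mk_mem_doubleCoset_moveRight (y : β) (d : Bool) {n : ℕ} (L : List ((α ⊕ β) × Bool))
    (hL : ∀ a ∈ L, a.1.isLeft) (P S : List ((α ⊕ β) × Bool))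
    (hn : P.length + L.length + S.length + 1 ≤ n) :
    mk (P ++ (Sum.inr y, d) :: (L ++ S)) ∈
      doubleCoset (mk (P ++ L ++ (Sum.inr y, d) :: S))
        (boundedConjClosure (commRels α β) (n / 2)) (boundedConjClosure (commRels α β) (n / 2)) := by
  induction L generalizing P with
  | nil => simpa using mem_doubleCoset_self _ _ _
  | cons a L ih =>
    obtain ⟨x, e, rfl⟩ : ∃ x e, a = (Sum.inl x, e) := by
      obtain ⟨x, hx⟩ := Sum.isLeft_iff.1 (hL a (List.mem_cons_self ..))
      exact ⟨x, a.2, Prod.ext hx rfl⟩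
    have hswap := mem_doubleCoset_swap (mk P) (mk (L ++ S)) x e y d (n := n)
      (by
        have hP := norm_mk_le (L₁ := P)
        have hLS := norm_mk_le (L₁ := L ++ S)
        simp only [List.length_append, List.length_cons] at hn hLS
        omega)
    have hmove := ih (fun b hb => hL b (List.mem_cons_of_mem _ hb)) (P ++ [(Sum.inl x, e)])
      (by simp at hn ⊢; omega)
    simp only [mul_mk, List.append_assoc, List.cons_append] at hswap hmove ⊢
    exact mem_doubleCoset_trans hswap hmove

theorem mk_mem_doubleCoset_sort {n : ℕ} (l : List ((α ⊕ β) × Bool)) (P S : List ((α ⊕ β) × Bool))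
    (hn : P.length + l.length + S.length ≤ n) :
    mk (P ++ l ++ S) ∈
      doubleCoset (mk (P ++ l.filter (·.1.isLeft) ++ l.filter (·.1.isRight) ++ S))
        (boundedConjClosure (commRels α β) (n / 2)) (boundedConjClosure (commRels α β) (n / 2)) := by
  induction l generalizing P with
  | nil => simpa using mem_doubleCoset_self _ _ _
  | cons a l ih =>
    obtain ⟨x | y, e⟩ := a
    · have hsort := ih (P ++ [(Sum.inl x, e)]) (by simp at hn ⊢; omega)
      simp only [List.append_assoc, List.singleton_append] at hsort
      simpa [List.filter_cons] using hsort
    · have hsort := ih (P ++ [(Sum.inr y, e)]) (by simp at hn ⊢; omega)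
      have hmove := mk_mem_doubleCoset_moveRight (n := n) y e (l.filter (·.1.isLeft))
        (fun b hb => (List.mem_filter.1 hb).2) P (l.filter (·.1.isRight) ++ S)
        (by have := l.length_filter_isLeft_add_isRight; simp at hn ⊢; omega)
      simp only [List.append_assoc, List.cons_append, List.nil_append] at hsort hmove
      simpa [List.filter_cons] using mem_doubleCoset_trans hsort hmove

theorem mem_doubleCoset_map_projL_mul_map_projR (w : FreeGroup (α ⊕ β)) :
    w ∈ doubleCoset (map Sum.inl (projL w) * map Sum.inr (projR w))
      (boundedConjClosure (commRels α β) (w.norm / 2))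
      (boundedConjClosure (commRels α β) (w.norm / 2)) := by
  have h := mk_mem_doubleCoset_sort (n := w.norm) w.toWord [] [] (by simp [FreeGroup.norm])
  simpa only [List.nil_append, List.append_nil, ← mul_mk, ← map_inl_projL_mk, ← map_inr_projR_mk,
    mk_toWord] using h

end Sorting

theorem stmt17 {A A' : Type} [DecidableEq A] [DecidableEq A']
    (R : Set (FreeGroup A)) (R' : Set (FreeGroup A'))
    (w : FreeGroup (A ⊕ A')) (hw : NullHomotopic (ProdRels R R') w) :
    NullHomotopic R (projL w) ∧ NullHomotopic R' (projR w) ∧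
    diamOf (ProdRels R R') w ≤
      max (max ((w.toWord.filter fun p => p.1.isLeft).length)
            ((w.toWord.filter fun p => p.1.isRight).length))
        (max (diamOf R (projL w)) (diamOf R' (projR w))) := by
  have hL := nullHomotopic_projL hw
  have hR := nullHomotopic_projR hw
  refine ⟨hL, hR, diamOf_le_of_mem_boundedConjClosure ?_⟩
  set M := max (max ((w.toWord.filter fun p => p.1.isLeft).length)
    ((w.toWord.filter fun p => p.1.isRight).length)) (max (diamOf R (projL w)) (diamOf R' (projR w)))
  have hlen : w.norm / 2 ≤ M := by
    have := w.toWord.length_filter_isLeft_add_isRight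
    simp only [FreeGroup.norm, M]
    omega
  have hcomm := boundedConjClosure_mono (commRels_subset_prodRels R R') hlen
  have hleft : FreeGroup.map Sum.inl (projL w) ∈ boundedConjClosure (ProdRels R R') M :=
    boundedConjClosure_mono (Set.subset_union_left.trans Set.subset_union_left) (by simp [M])
      (map_boundedConjClosure_le Sum.inl ⟨_, hL.mem_boundedConjClosure_diamOf, rfl⟩)
  have hright : FreeGroup.map Sum.inr (projR w) ∈ boundedConjClosure (ProdRels R R') M :=
    boundedConjClosure_mono (Set.subset_union_right.trans Set.subset_union_left) (by simp [M])
      (map_boundedConjClosure_le Sum.inr ⟨_, hR.mem_boundedConjClosure_diamOf, rfl⟩)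
  obtain ⟨a, ha, b, hb, hab⟩ :=
    DoubleCoset.mem_doubleCoset.1 (mem_doubleCoset_map_projL_mul_map_projR w)
  rw [hab]
  exact mul_mem (mul_mem (hcomm ha) (mul_mem hleft hright)) (hcomm hb)
end
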